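/- (Proposition 4.2, optimal spoofing signal for a QPSK Type-II symbol.) Let 0 ≤ P ≤ 4 and B ≥ 0. For all real u ≥ 0 and w ≥ 0 with u + w = B, one has (1/2 + (1/2)·erf(√u − √(P/2)))·(1/2 + (1/2)·erf(√w − √(P/2))) ≤ (1/2 + (1/2)·erf(√(B/2) − √(P/2)))². In particular, splitting the spoofing power B equally between the real and imaginary components (z_R = z_I = −√(B/2)) maximizes the spoofing success probability, so the conditional SSER equals g₂(B) = 1 − (1/2 + (1/2)·erf(√(B/2) − √(P/2)))². -/

import Mathlib

open MeasureTheory ProbabilityTheory Real Set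

noncomputable def erf (x : ℝ) : ℝ :=
  (2 / Real.sqrt Real.pi) * ∫ t in (0:ℝ)..x, Real.exp (-t^2)

/-!
Write `c = √(P/2)` and `F x = 1/2 + 1/2 · erf (√x - c)`. Since `P ≤ 4` gives `c ≤ √2`, `F` is
concave on `[0, ∞)`: its derivative is `exp (-(s - c)²) / (2√π s)` with `s = √x`, which decreases
in `s` because `(exp (-(s - c)²) / s)' = -exp (-(s - c)²) (2s² - 2cs + 1) / s²` and
`2s² - 2cs + 1 ≥ (√2 s - 1)² ≥ 0` for `s > 0`.
For the nonnegative concave `F`, AM–GM followed by Jensen gives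
`F u · F w ≤ ((F u + F w) / 2)² ≤ F ((u + w) / 2)²`.
-/

theorem ConcaveOn.mul_le_sq_apply_midpoint {s : Set ℝ} {f : ℝ → ℝ} (hf : ConcaveOn ℝ s f)
    {u w : ℝ} (hu : u ∈ s) (hw : w ∈ s) (hfu : 0 ≤ f u) (hfw : 0 ≤ f w) :
    f u * f w ≤ f ((u + w) / 2) ^ 2 := by
  have hjensen : (f u + f w) / 2 ≤ f ((u + w) / 2) := by
    have h := hf.2 hu hw (by norm_num : (0:ℝ) ≤ 1/2) (by norm_num : (0:ℝ) ≤ 1/2) (by norm_num)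
    rwa [smul_eq_mul, smul_eq_mul, smul_eq_mul, smul_eq_mul, ← mul_add, ← mul_add,
      one_div_mul_eq_div, one_div_mul_eq_div] at h
  calc f u * f w ≤ ((f u + f w) / 2) ^ 2 := by nlinarith [sq_nonneg (f u - f w)]
    _ ≤ f ((u + w) / 2) ^ 2 := pow_le_pow_left₀ (by positivity) hjensen 2

theorem concaveOn_comp_sqrt_of_antitoneOn_deriv_div {G G' : ℝ → ℝ} (hG : Continuous G)
    (hG' : ∀ s, 0 < s → HasDerivAt G (G' s) s) (hanti : AntitoneOn (fun s => G' s / s) (Ioi 0)) :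
    ConcaveOn ℝ (Ici 0) (fun x => G (√x)) := by
  have hderiv : ∀ x, 0 < x → HasDerivAt (fun x => G (√x)) (G' √x / √x / 2) x := by
    intro x hx
    exact ((hG' _ (sqrt_pos.2 hx)).comp x (hasDerivAt_sqrt hx.ne')).congr_deriv (by field_simp)
  refine AntitoneOn.concaveOn_of_deriv (convex_Ici 0) (hG.comp continuous_sqrt).continuousOn
    ?_ ?_ <;> rw [interior_Ici]
  · exact fun x hx => (hderiv x hx).differentiableAt.differentiableWithinAt
  · intro x hx y hy hxy
    rw [(hderiv x hx).deriv, (hderiv y hy).deriv]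
    exact div_le_div_of_nonneg_right
      (hanti (sqrt_pos.2 hx) (sqrt_pos.2 hy) (sqrt_le_sqrt hxy)) zero_le_two

theorem hasDerivAt_erf (x : ℝ) : HasDerivAt erf (2 / √π * exp (-x ^ 2)) x := by
  have hcont : Continuous fun t : ℝ => exp (-t ^ 2) := by fun_prop
  exact (intervalIntegral.integral_hasDerivAt_right (hcont.intervalIntegrable 0 x)
    (hcont.stronglyMeasurableAtFilter _ _) hcont.continuousAt).const_mul _

@[fun_prop]
theorem continuous_erf : Continuous erf :=
  continuous_iff_continuousAt.2 fun x => (hasDerivAt_erf x).continuousAt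

theorem erf_neg (x : ℝ) : erf (-x) = -erf x := by
  have h := intervalIntegral.integral_comp_neg (a := 0) (b := x) fun t => exp (-t ^ 2)
  simp only [neg_sq, neg_zero] at h
  rw [erf, erf, h, intervalIntegral.integral_symm, mul_neg]

theorem erf_le_one {x : ℝ} (hx : 0 ≤ x) : erf x ≤ 1 := by
  have hint : ∫ t in (0:ℝ)..x, exp (-t ^ 2) ≤ √π / 2 := by
    have htail : ∫ t in Ioi (0:ℝ), exp (-t ^ 2) = √π / 2 := by
      simpa using integral_gaussian_Ioi 1
    rw [intervalIntegral.integral_of_le hx, ← htail]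
    refine setIntegral_mono_set ?_ (.of_forall fun t => (exp_pos _).le)
      (.of_forall fun t ht => ht.1)
    simpa using (integrable_exp_neg_mul_sq one_pos).integrableOn (s := Ioi (0:ℝ))
  have hpi : 0 < √π := sqrt_pos.2 pi_pos
  rw [erf, div_mul_eq_mul_div, div_le_one hpi]
  linarith

theorem neg_one_le_erf (x : ℝ) : -1 ≤ erf x := by
  rcases le_total 0 x with hx | hx
  · have : 0 ≤ ∫ t in (0:ℝ)..x, exp (-t ^ 2) :=
      intervalIntegral.integral_nonneg hx fun t _ => (exp_pos _).le
    have : 0 ≤ erf x := mul_nonneg (by positivity) this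
    linarith
  · have hodd := erf_neg (-x)
    rw [neg_neg] at hodd
    linarith [erf_le_one (neg_nonneg.2 hx)]

theorem antitoneOn_exp_neg_sq_sub_div {c : ℝ} (hc : c ≤ √2) :
    AntitoneOn (fun s => exp (-(s - c) ^ 2) / s) (Ioi 0) := by
  have hderiv : ∀ s, 0 < s → HasDerivAt (fun s => exp (-(s - c) ^ 2) / s)
      (-exp (-(s - c) ^ 2) * (2 * s ^ 2 - 2 * c * s + 1) / s ^ 2) s := by
    intro s hs
    have hexp : HasDerivAt (fun s => exp (-(s - c) ^ 2))
        (exp (-(s - c) ^ 2) * (-(2 * (s - c)))) s := by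
      simpa using (((hasDerivAt_id s).sub_const c).pow 2).neg.exp
    refine (hexp.div (hasDerivAt_id s) hs.ne').congr_deriv ?_
    simp only [id]
    ring
  refine antitoneOn_of_deriv_nonpos (convex_Ioi 0) ?_ ?_ ?_
  · exact fun s hs => (hderiv s hs).continuousAt.continuousWithinAt
  · rw [interior_Ioi]
    exact fun s hs => (hderiv s hs).differentiableAt.differentiableWithinAt
  · rw [interior_Ioi]
    intro s (hs : 0 < s)
    rw [(hderiv s hs).deriv]
    have hquad : 0 ≤ 2 * s ^ 2 - 2 * c * s + 1 := by
      have h2 : √2 ^ 2 = 2 := sq_sqrt zero_le_two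
      nlinarith [sq_nonneg (√2 * s - 1), mul_le_mul_of_nonneg_right hc hs.le]
    have := exp_pos (-(s - c) ^ 2)
    apply div_nonpos_of_nonpos_of_nonneg _ (sq_nonneg s)
    nlinarith

theorem concaveOn_erf_sqrt_sub {c : ℝ} (hc : c ≤ √2) :
    ConcaveOn ℝ (Ici 0) (fun x => 1/2 + 1/2 * erf (√x - c)) := by
  refine concaveOn_comp_sqrt_of_antitoneOn_deriv_div (G := fun s => 1/2 + 1/2 * erf (s - c))
    (G' := fun s => exp (-(s - c) ^ 2) / √π) (by fun_prop) (fun s _ => ?_) ?_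
  · have h := (((hasDerivAt_erf (s - c)).comp s ((hasDerivAt_id s).sub_const c)).const_mul
      (1/2 : ℝ)).const_add (1/2 : ℝ)
    exact h.congr_deriv (by field_simp)
  · intro x hx y hy hxy
    simp only [div_right_comm _ √π]
    exact div_le_div_of_nonneg_right (antitoneOn_exp_neg_sq_sub_div hc hx hy hxy) (sqrt_nonneg π)

theorem stmt_13_general (P B : ℝ) (hP4 : P ≤ 4) :
    ∀ u w : ℝ, 0 ≤ u → 0 ≤ w → u + w = B →
      (1/2 + (1/2) * erf (Real.sqrt u - Real.sqrt (P/2))) *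
        (1/2 + (1/2) * erf (Real.sqrt w - Real.sqrt (P/2))) ≤
      (1/2 + (1/2) * erf (Real.sqrt (B/2) - Real.sqrt (P/2)))^2 := by
  intro u w hu hw huw
  have hc : √(P / 2) ≤ √2 := sqrt_le_sqrt (by linarith)
  have hF_nonneg : ∀ x, 0 ≤ 1/2 + 1/2 * erf (√x - √(P / 2)) := fun x => by
    linarith [neg_one_le_erf (√x - √(P / 2))]
  have h := (concaveOn_erf_sqrt_sub hc).mul_le_sq_apply_midpoint hu hw
    (hF_nonneg u) (hF_nonneg w)
  rwa [huw] at h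

theorem stmt_13 (P B : ℝ) (hP0 : 0 ≤ P) (hP4 : P ≤ 4) (hB : 0 ≤ B) :
    ∀ u w : ℝ, 0 ≤ u → 0 ≤ w → u + w = B →
      (1/2 + (1/2) * erf (Real.sqrt u - Real.sqrt (P/2))) *
        (1/2 + (1/2) * erf (Real.sqrt w - Real.sqrt (P/2))) ≤
      (1/2 + (1/2) * erf (Real.sqrt (B/2) - Real.sqrt (P/2)))^2 :=
  stmt_13_general P B hP4
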